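/- arXiv:1008.4747 — 3 statements merged into one kernel-verified Lean document; each statement's English description precedes it below -/
import Mathlib

section
/- Let (V,𝓑) be a nontrivial Steiner triple system STS(v), i.e., a Steiner 2-design S(2,3,v) with v ≥ 7, and let H be its point-by-block incidence matrix over 𝔽₂. Then the minimum distance d of the binary linear code with parity-check matrix H (codewords indexed by the blocks of 𝓑) satisfies 4 ≤ d ≤ 8. -/
open scoped Classical

private lemma card_le_four {α : Type*} [DecidableEq α] (x y z w : α) :
    ({x, y, z, w} : Finset α).card ≤ 4 := by
  refine le_trans (Finset.card_insert_le _ _) (Nat.succ_le_succ ?_)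
  refine le_trans (Finset.card_insert_le _ _) (Nat.succ_le_succ ?_)
  refine le_trans (Finset.card_insert_le _ _) (Nat.succ_le_succ ?_)
  simp

/-- Fujiwara–Colbourn: the minimum distance `d` of the binary linear code
whose parity-check matrix is the point-by-block incidence matrix of a nontrivial Steiner
triple system `STS(v)` (`v ≥ 7`) satisfies `4 ≤ d ≤ 8`. -/
theorem stmt_16 (v : ℕ) (hv7 : 7 ≤ v)
    (V : Type) [Fintype V] [DecidableEq V] (hv : Fintype.card V = v)
    (𝓑 : Finset (Finset V))
    (hblocks : ∀ B ∈ 𝓑, B.card = 3)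
    (hpairs : ∀ p q : V, p ≠ q → ∃! B, B ∈ 𝓑 ∧ p ∈ B ∧ q ∈ B)
    (H : Matrix V {B // B ∈ 𝓑} (ZMod 2))
    (hH : ∀ p B, H p B = if p ∈ B.1 then 1 else 0) :
    ∃ d : ℕ,
      IsLeast {w : ℕ | ∃ x : {B // B ∈ 𝓑} → ZMod 2, H.mulVec x = 0 ∧ x ≠ 0 ∧
        (Finset.univ.filter (fun B => x B ≠ 0)).card = w} d ∧
      4 ≤ d ∧ d ≤ 8 := by
  classical
  -- ===== third-point machinery =====
  have hex : ∀ p q : V, ∃ (B : Finset V) (r : V), p ≠ q →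
      B ∈ 𝓑 ∧ B = {p, q, r} ∧ r ≠ p ∧ r ≠ q ∧
        ∀ B' ∈ 𝓑, p ∈ B' → q ∈ B' → B' = B := by
    intro p q
    by_cases h : p = q
    · exact ⟨∅, p, fun h' => absurd h h'⟩
    · obtain ⟨B, ⟨hB, hpB, hqB⟩, huniq⟩ := hpairs p q h
      have hsub : ({p, q} : Finset V) ⊆ B := by
        intro z hz
        rcases Finset.mem_insert.mp hz with rfl | hz
        · exact hpB
        · rwa [Finset.mem_singleton.mp hz]
      have hc1 : (B \ {p, q}).card = 1 := by
        rw [Finset.card_sdiff_of_subset hsub, hblocks B hB, Finset.card_pair h]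
      obtain ⟨r, hr⟩ := Finset.card_eq_one.mp hc1
      have hrB : r ∈ B \ ({p, q} : Finset V) := by
        rw [hr]; exact Finset.mem_singleton_self r
      rw [Finset.mem_sdiff, Finset.mem_insert, Finset.mem_singleton] at hrB
      push_neg at hrB
      refine ⟨B, r, fun _ => ⟨hB, ?_, hrB.2.1, hrB.2.2,
        fun B' hB' hp hq => huniq B' ⟨hB', hp, hq⟩⟩⟩
      have h2 : ({p, q} : Finset V) ∪ (B \ {p, q}) = B := Finset.union_sdiff_of_subset hsub
      rw [hr] at h2
      rw [← h2]
      ext z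
      simp [or_assoc]
  choose blk third hspec using hex
  have hblkmem : ∀ p q : V, p ≠ q → blk p q ∈ 𝓑 := fun p q h => ((hspec p q) h).1
  have hblkeq : ∀ p q : V, p ≠ q → blk p q = {p, q, third p q} :=
    fun p q h => ((hspec p q) h).2.1
  have hth1 : ∀ p q : V, p ≠ q → third p q ≠ p := fun p q h => ((hspec p q) h).2.2.1
  have hth2 : ∀ p q : V, p ≠ q → third p q ≠ q := fun p q h => ((hspec p q) h).2.2.2.1
  have huniq : ∀ p q : V, p ≠ q → ∀ B' ∈ 𝓑, p ∈ B' → q ∈ B' → B' = blk p q :=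
    fun p q h => ((hspec p q) h).2.2.2.2
  have hmem : ∀ (p q : V), p ≠ q → ∀ z, (z ∈ blk p q ↔ z = p ∨ z = q ∨ z = third p q) := by
    intro p q h z; rw [hblkeq p q h]; simp
  have hmem1 : ∀ p q : V, p ≠ q → p ∈ blk p q := by
    intro p q h; rw [hmem p q h]; tauto
  have hmem2 : ∀ p q : V, p ≠ q → q ∈ blk p q := by
    intro p q h; rw [hmem p q h]; tauto
  have hmem3 : ∀ p q : V, p ≠ q → third p q ∈ blk p q := by
    intro p q h; rw [hmem p q h]; tauto
  have hcardblk : ∀ p q : V, p ≠ q → (blk p q).card = 3 :=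
    fun p q h => hblocks _ (hblkmem p q h)
  have hcollapse : ∀ (B B' : Finset V), B ∈ 𝓑 → B' ∈ 𝓑 → ∀ x y : V, x ≠ y →
      x ∈ B → y ∈ B → x ∈ B' → y ∈ B' → B = B' := by
    intro B B' hB hB' x y hxy hxB hyB hxB' hyB'
    rw [huniq x y hxy B hB hxB hyB, huniq x y hxy B' hB' hxB' hyB']
  -- ===== basic facts about a quadrilateral tuple (p,a,c) =====
  have hfacts : ∀ p a c : V, p ≠ a → c ∉ blk p a →
      p ≠ c ∧ a ≠ c ∧ third p a ≠ third p c ∧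
      c ≠ third p a ∧ third p c ≠ a ∧ third p c ∉ blk p a ∧
      a ∉ blk p c ∧ third p a ∉ blk p c ∧
      third a c ≠ p ∧ third a c ≠ third p a ∧ third a c ≠ third p c ∧
      third (third p a) (third p c) ≠ p ∧ third (third p a) (third p c) ≠ a ∧
      third (third p a) (third p c) ≠ c ∧
      blk p a ≠ blk p c ∧ blk p a ≠ blk a c ∧
      blk p a ≠ blk (third p a) (third p c) ∧ blk p c ≠ blk a c ∧
      blk p c ≠ blk (third p a) (third p c) ∧
      blk a c ≠ blk (third p a) (third p c) := by
    intro p a c hpa hc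
    have hpc : p ≠ c := fun h => hc (h ▸ hmem1 p a hpa)
    have hac : a ≠ c := fun h => hc (h ▸ hmem2 p a hpa)
    have hcb : c ≠ third p a := fun h => hc (h ▸ hmem3 p a hpa)
    have hdp : third p c ≠ p := hth1 p c hpc
    have hdc : third p c ≠ c := hth2 p c hpc
    have hdB1 : third p c ∉ blk p a := by
      intro hd
      have h1 : blk p a = blk p (third p c) :=
        huniq p (third p c) (Ne.symm hdp) _ (hblkmem p a hpa) (hmem1 p a hpa) hd
      have h2 : blk p c = blk p (third p c) :=
        huniq p (third p c) (Ne.symm hdp) _ (hblkmem p c hpc) (hmem1 p c hpc) (hmem3 p c hpc)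
      have h3 : blk p a = blk p c := h1.trans h2.symm
      exact hc (by rw [h3]; exact hmem2 p c hpc)
    have hbd : third p a ≠ third p c := fun h => hdB1 (h ▸ hmem3 p a hpa)
    have hda : third p c ≠ a := fun h => hdB1 (by rw [h]; exact hmem2 p a hpa)
    have haB2 : a ∉ blk p c := by
      intro ha
      have h1 : blk p c = blk p a :=
        huniq p a hpa _ (hblkmem p c hpc) (hmem1 p c hpc) ha
      exact hc (by rw [← h1]; exact hmem2 p c hpc)
    have hbB2 : third p a ∉ blk p c := by
      intro hb
      have hbp : third p a ≠ p := hth1 p a hpa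
      have h1 : blk p c = blk p (third p a) :=
        huniq p (third p a) (Ne.symm hbp) _ (hblkmem p c hpc) (hmem1 p c hpc) hb
      have h2 : blk p a = blk p (third p a) :=
        huniq p (third p a) (Ne.symm hbp) _ (hblkmem p a hpa) (hmem1 p a hpa) (hmem3 p a hpa)
      have h3 : blk p c = blk p a := h1.trans h2.symm
      exact hc (by rw [← h3]; exact hmem2 p c hpc)
    have hup : third a c ≠ p := by
      intro h
      have h1 : p ∈ blk a c := by rw [← h]; exact hmem3 a c hac
      have h2 : blk a c = blk p a :=
        hcollapse _ _ (hblkmem a c hac) (hblkmem p a hpa) p a hpa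
          h1 (hmem1 a c hac) (hmem1 p a hpa) (hmem2 p a hpa)
      exact hc (by rw [← h2]; exact hmem2 a c hac)
    have hub : third a c ≠ third p a := by
      intro h
      have h1 : third p a ∈ blk a c := by rw [← h]; exact hmem3 a c hac
      have h2 : blk a c = blk p a :=
        hcollapse _ _ (hblkmem a c hac) (hblkmem p a hpa) a (third p a)
          (Ne.symm (hth2 p a hpa)) (hmem1 a c hac) h1 (hmem2 p a hpa) (hmem3 p a hpa)
      exact hc (by rw [← h2]; exact hmem2 a c hac)
    have hud : third a c ≠ third p c := by
      intro h
      have h1 : third p c ∈ blk a c := by rw [← h]; exact hmem3 a c hac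
      have h2 : blk a c = blk p c :=
        hcollapse _ _ (hblkmem a c hac) (hblkmem p c hpc) c (third p c)
          (Ne.symm hdc) (hmem2 a c hac) h1 (hmem2 p c hpc) (hmem3 p c hpc)
      exact haB2 (by rw [← h2]; exact hmem1 a c hac)
    have hwp : third (third p a) (third p c) ≠ p := by
      intro h
      have h1 : p ∈ blk (third p a) (third p c) := by
        have h1' := hmem3 _ _ hbd; rwa [h] at h1'
      have h2 : blk (third p a) (third p c) = blk p a :=
        hcollapse _ _ (hblkmem _ _ hbd) (hblkmem p a hpa) p (third p a)
          (Ne.symm (hth1 p a hpa)) h1 (hmem1 _ _ hbd) (hmem1 p a hpa) (hmem3 p a hpa)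
      exact hdB1 (by rw [← h2]; exact hmem2 _ _ hbd)
    have hwa : third (third p a) (third p c) ≠ a := by
      intro h
      have h1 : a ∈ blk (third p a) (third p c) := by
        have h1' := hmem3 _ _ hbd; rwa [h] at h1'
      have h2 : blk (third p a) (third p c) = blk p a :=
        hcollapse _ _ (hblkmem _ _ hbd) (hblkmem p a hpa) a (third p a)
          (Ne.symm (hth2 p a hpa)) h1 (hmem1 _ _ hbd) (hmem2 p a hpa) (hmem3 p a hpa)
      exact hdB1 (by rw [← h2]; exact hmem2 _ _ hbd)
    have hwc : third (third p a) (third p c) ≠ c := by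
      intro h
      have h1 : c ∈ blk (third p a) (third p c) := by
        have h1' := hmem3 _ _ hbd; rwa [h] at h1'
      have h2 : blk (third p a) (third p c) = blk p c :=
        hcollapse _ _ (hblkmem _ _ hbd) (hblkmem p c hpc) c (third p c)
          (Ne.symm hdc) h1 (hmem2 _ _ hbd) (hmem2 p c hpc) (hmem3 p c hpc)
      exact hbB2 (by rw [← h2]; exact hmem1 _ _ hbd)
    have hB12 : blk p a ≠ blk p c := fun h => hc (by rw [h]; exact hmem2 p c hpc)
    have hB1M1 : blk p a ≠ blk a c := fun h => hc (by rw [h]; exact hmem2 a c hac)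
    have hB1M4 : blk p a ≠ blk (third p a) (third p c) :=
      fun h => hdB1 (by rw [h]; exact hmem2 _ _ hbd)
    have hB2M1 : blk p c ≠ blk a c := fun h => haB2 (by rw [h]; exact hmem1 a c hac)
    have hB2M4 : blk p c ≠ blk (third p a) (third p c) :=
      fun h => hbB2 (by rw [h]; exact hmem1 _ _ hbd)
    have hM1M4 : blk a c ≠ blk (third p a) (third p c) := by
      intro h
      have h1 : a ∈ blk (third p a) (third p c) := by rw [← h]; exact hmem1 a c hac
      rw [hmem _ _ hbd] at h1
      rcases h1 with h1 | h1 | h1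
      · exact (hth2 p a hpa) h1.symm
      · exact hda h1.symm
      · exact hwa h1.symm
    exact ⟨hpc, hac, hbd, hcb, hda, hdB1, haB2, hbB2, hup, hub, hud, hwp, hwa, hwc,
      hB12, hB1M1, hB1M4, hB2M1, hB2M4, hM1M4⟩
  -- ===== parity of quadrilateral degrees =====
  have hquad : ∀ p a c : V, ∀ _hpa : p ≠ a, c ∉ blk p a → ∀ q : V,
      ((({blk p a, blk p c, blk a c, blk (third p a) (third p c)} : Finset (Finset V)).filter
        (fun B => q ∈ B)).card) % 2 =
      if (q = third a c ∨ q = third (third p a) (third p c)) ∧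
          third a c ≠ third (third p a) (third p c) then 1 else 0 := by
    intro p a c hpa hc q
    obtain ⟨hpc, hac, hbd, hcb, hda, hdB1, haB2, hbB2, hup, hub, hud, hwp, hwa, hwc,
      hB12, hB1M1, hB1M4, hB2M1, hB2M4, hM1M4⟩ := hfacts p a c hpa hc
    have hn1 : blk p a ∉ ({blk p c, blk a c, blk (third p a) (third p c)} : Finset (Finset V)) := by
      simp [hB12, hB1M1, hB1M4]
    have hn2 : blk p c ∉ ({blk a c, blk (third p a) (third p c)} : Finset (Finset V)) := by
      simp [hB2M1, hB2M4]
    have hn3 : blk a c ∉ ({blk (third p a) (third p c)} : Finset (Finset V)) := by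
      simp [hM1M4]
    rw [Finset.card_filter]
    rw [Finset.sum_insert hn1, Finset.sum_insert hn2, Finset.sum_insert hn3,
      Finset.sum_singleton]
    simp only [hmem p a hpa, hmem p c hpc, hmem a c hac, hmem _ _ hbd]
    by_cases h1 : q = p
    · simp [h1, hpa, hpc, Ne.symm hup, Ne.symm (hth1 p a hpa), Ne.symm (hth1 p c hpc),
        Ne.symm hwp]
    by_cases h2 : q = a
    · simp [h2, Ne.symm hpa, hac, Ne.symm (hth2 p a hpa), Ne.symm hda,
        Ne.symm (hth1 a c hac), Ne.symm hwa]
    by_cases h3 : q = third p a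
    · simp [h3, hth1 p a hpa, hth2 p a hpa, Ne.symm hcb, hbd, Ne.symm hub,
        Ne.symm (hth1 _ _ hbd)]
    by_cases h4 : q = c
    · simp [h4, Ne.symm hpc, Ne.symm hac, hcb, Ne.symm (hth2 p c hpc),
        Ne.symm (hth2 a c hac), Ne.symm hwc]
    by_cases h5 : q = third p c
    · simp [h5, hth1 p c hpc, hda, Ne.symm hbd, hth2 p c hpc, Ne.symm hud,
        Ne.symm (hth2 _ _ hbd)]
    by_cases h6 : q = third a c
    · by_cases huw : third a c = third (third p a) (third p c)
      · simp [h6, hup, hth1 a c hac, hub, hth2 a c hac, hud, huw,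
          hwp, hwa, hwc, hth1 _ _ hbd, hth2 _ _ hbd]
      · simp [h6, hup, hth1 a c hac, hub, hth2 a c hac, hud, huw]
    by_cases h7 : q = third (third p a) (third p c)
    · have huw : third a c ≠ third (third p a) (third p c) := fun h => h6 (h7.trans h.symm)
      simp [h7, hwp, hwa, hth1 _ _ hbd, hwc, hth2 _ _ hbd, huw, Ne.symm huw]
    · simp [h1, h2, h3, h4, h5, h6, h7]
  -- ===== unique representation of a quadrilateral =====
  have hrep : ∀ p a c p' a' c' : V,
      ∀ _hpa : p ≠ a, c ∉ blk p a → ∀ _hpa' : p' ≠ a', c' ∉ blk p' a' →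
      ({blk p' a', blk p' c', blk a' c', blk (third p' a') (third p' c')} : Finset (Finset V)) =
        {blk p a, blk p c, blk a c, blk (third p a) (third p c)} →
      third a' c' = third a c →
      third (third p' a') (third p' c') = third (third p a) (third p c) →
      third a c ≠ third (third p a) (third p c) →
      (p' = p ∧ a' = a ∧ c' = c) ∨ (p' = p ∧ a' = c ∧ c' = a) := by
    intro p a c p' a' c' hpa hc hpa' hc' hQ hu hw hne
    obtain ⟨hpc, hac, hbd, hcb, hda, hdB1, haB2, hbB2, hup, hub, hud, hwp, hwa, hwc,
      hB12, hB1M1, hB1M4, hB2M1, hB2M4, hM1M4⟩ := hfacts p a c hpa hc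
    obtain ⟨hpc', hac', hbd', hcb', hda', hdB1', haB2', hbB2', hup', hub', hud', hwp', hwa', hwc',
      hB12', hB1M1', hB1M4', hB2M1', hB2M4', hM1M4'⟩ := hfacts p' a' c' hpa' hc'
    have hne' : third a' c' ≠ third (third p' a') (third p' c') := by
      rw [hu, hw]; exact hne
    -- helper non-membership facts for unprimed quad
    have haM4 : a ∉ blk (third p a) (third p c) := by
      rw [hmem _ _ hbd]; push_neg
      exact ⟨Ne.symm (hth2 p a hpa), Ne.symm hda, Ne.symm hwa⟩
    have hcM4 : c ∉ blk (third p a) (third p c) := by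
      rw [hmem _ _ hbd]; push_neg
      exact ⟨hcb, Ne.symm (hth2 p c hpc), Ne.symm hwc⟩
    have hbM1 : third p a ∉ blk a c := by
      rw [hmem a c hac]; push_neg
      exact ⟨hth2 p a hpa, Ne.symm hcb, Ne.symm hub⟩
    have hdM1 : third p c ∉ blk a c := by
      rw [hmem a c hac]; push_neg
      exact ⟨hda, hth2 p c hpc, Ne.symm hud⟩
    have huB1 : third a c ∉ blk p a := by
      rw [hmem p a hpa]; push_neg
      exact ⟨hup, hth1 a c hac, hub⟩
    have huB2 : third a c ∉ blk p c := by
      rw [hmem p c hpc]; push_neg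
      exact ⟨hup, hth2 a c hac, hud⟩
    have huM4 : third a c ∉ blk (third p a) (third p c) := by
      rw [hmem _ _ hbd]; push_neg
      exact ⟨hub, hud, hne⟩
    -- membership of primed blocks in the unprimed quad
    have hQmem : ∀ X : Finset V,
        X ∈ ({blk p' a', blk p' c', blk a' c', blk (third p' a') (third p' c')} :
          Finset (Finset V)) →
        X = blk p a ∨ X = blk p c ∨ X = blk a c ∨
          X = blk (third p a) (third p c) := by
      intro X hX
      rw [hQ] at hX
      simpa using hX
    have hM1'mem := hQmem (blk a' c') (by simp)
    have hM4'mem := hQmem (blk (third p' a') (third p' c')) (by simp)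
    have hB1'mem := hQmem (blk p' a') (by simp)
    have hB2'mem := hQmem (blk p' c') (by simp)
    -- the primed cross blocks are disjoint
    have hdisj' : ∀ z : V, z ∈ blk a' c' → z ∈ blk (third p' a') (third p' c') → False := by
      intro z hz1 hz2
      rw [hmem a' c' hac'] at hz1
      rw [hmem _ _ hbd'] at hz2
      rcases hz1 with h1 | h1 | h1 <;> rcases hz2 with h2 | h2 | h2
      · exact (hth2 p' a' hpa') (h1.symm.trans h2).symm
      · exact hda' (h1.symm.trans h2).symm
      · exact hwa' (h1.symm.trans h2).symm
      · exact hcb' (h1.symm.trans h2)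
      · exact (hth2 p' c' hpc') (h1.symm.trans h2).symm
      · exact hwc' (h1.symm.trans h2).symm
      · exact hub' (h1.symm.trans h2)
      · exact hud' (h1.symm.trans h2)
      · exact hne' (h1.symm.trans h2)
    -- pin down the cross pair
    have hcross : (blk a' c' = blk a c ∧
          blk (third p' a') (third p' c') = blk (third p a) (third p c)) ∨
        (blk a' c' = blk (third p a) (third p c) ∧
          blk (third p' a') (third p' c') = blk a c) := by
      rcases hM1'mem with hM1' | hM1' | hM1' | hM1' <;>
        rcases hM4'mem with hM4' | hM4' | hM4' | hM4'
      · exact absurd (hM1'.trans hM4'.symm) hM1M4'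
      · exact (hdisj' p (by rw [hM1']; exact hmem1 p a hpa)
          (by rw [hM4']; exact hmem1 p c hpc)).elim
      · exact (hdisj' a (by rw [hM1']; exact hmem2 p a hpa)
          (by rw [hM4']; exact hmem1 a c hac)).elim
      · exact (hdisj' (third p a) (by rw [hM1']; exact hmem3 p a hpa)
          (by rw [hM4']; exact hmem1 _ _ hbd)).elim
      · exact (hdisj' p (by rw [hM1']; exact hmem1 p c hpc)
          (by rw [hM4']; exact hmem1 p a hpa)).elim
      · exact absurd (hM1'.trans hM4'.symm) hM1M4'
      · exact (hdisj' c (by rw [hM1']; exact hmem2 p c hpc)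
          (by rw [hM4']; exact hmem2 a c hac)).elim
      · exact (hdisj' (third p c) (by rw [hM1']; exact hmem3 p c hpc)
          (by rw [hM4']; exact hmem2 _ _ hbd)).elim
      · exact (hdisj' a (by rw [hM1']; exact hmem1 a c hac)
          (by rw [hM4']; exact hmem2 p a hpa)).elim
      · exact (hdisj' c (by rw [hM1']; exact hmem2 a c hac)
          (by rw [hM4']; exact hmem2 p c hpc)).elim
      · exact absurd (hM1'.trans hM4'.symm) hM1M4'
      · exact Or.inl ⟨hM1', hM4'⟩
      · exact (hdisj' (third p a) (by rw [hM1']; exact hmem1 _ _ hbd)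
          (by rw [hM4']; exact hmem3 p a hpa)).elim
      · exact (hdisj' (third p c) (by rw [hM1']; exact hmem2 _ _ hbd)
          (by rw [hM4']; exact hmem3 p c hpc)).elim
      · exact Or.inr ⟨hM1', hM4'⟩
      · exact absurd (hM1'.trans hM4'.symm) hM1M4'
    -- the primed point blocks are among the unprimed point blocks
    have hB1'B : blk p' a' = blk p a ∨ blk p' a' = blk p c := by
      rcases hB1'mem with h | h | h | h
      · exact Or.inl h
      · exact Or.inr h
      · exfalso
        rcases hcross with ⟨h1, _⟩ | ⟨_, h2⟩
        · exact hB1M1' (h.trans h1.symm)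
        · exact hB1M4' (h.trans h2.symm)
      · exfalso
        rcases hcross with ⟨_, h2⟩ | ⟨h1, _⟩
        · exact hB1M4' (h.trans h2.symm)
        · exact hB1M1' (h.trans h1.symm)
    have hB2'B : blk p' c' = blk p a ∨ blk p' c' = blk p c := by
      rcases hB2'mem with h | h | h | h
      · exact Or.inl h
      · exact Or.inr h
      · exfalso
        rcases hcross with ⟨h1, _⟩ | ⟨_, h2⟩
        · exact hB2M1' (h.trans h1.symm)
        · exact hB2M4' (h.trans h2.symm)
      · exfalso
        rcases hcross with ⟨_, h2⟩ | ⟨h1, _⟩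
        · exact hB2M4' (h.trans h2.symm)
        · exact hB2M1' (h.trans h1.symm)
    -- p' = p
    have hp'B1 : p' ∈ blk p a ∧ p' ∈ blk p c := by
      rcases hB1'B with h | h <;> rcases hB2'B with h' | h'
      · exact absurd (h.trans h'.symm) hB12'
      · exact ⟨by rw [← h]; exact hmem1 p' a' hpa', by rw [← h']; exact hmem1 p' c' hpc'⟩
      · exact ⟨by rw [← h']; exact hmem1 p' c' hpc', by rw [← h]; exact hmem1 p' a' hpa'⟩
      · exact absurd (h.trans h'.symm) hB12'
    have hp'p : p' = p := by
      by_contra hne2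
      have h1 : blk p a = blk p c :=
        hcollapse _ _ (hblkmem p a hpa) (hblkmem p c hpc) p p' (fun h => hne2 h.symm)
          (hmem1 p a hpa) hp'B1.1 (hmem1 p c hpc) hp'B1.2
      exact hB12 h1
    -- case split on which point block is which
    rcases hB1'B with hB1' | hB1'
    · -- blk p' a' = blk p a
      have ha'B1 : a' ∈ blk p a := by rw [← hB1']; exact hmem2 p' a' hpa'
      rw [hmem p a hpa] at ha'B1
      rcases ha'B1 with h | h | h
      · exact absurd (hp'p.trans h.symm) hpa'
      · -- a' = a : the untwisted case
        have hM1' : blk a' c' = blk a c := by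
          rcases hcross with ⟨h1, _⟩ | ⟨h1, _⟩
          · exact h1
          · exfalso
            have hmem' : a' ∈ blk (third p a) (third p c) := by
              rw [← h1]; exact hmem1 a' c' hac'
            rw [h] at hmem'
            exact haM4 hmem'
        have hB2' : blk p' c' = blk p c := by
          rcases hB2'B with h' | h'
          · exact absurd (hB1'.trans h'.symm) hB12'
          · exact h'
        have hc'M1 : c' ∈ blk a c := by rw [← hM1']; exact hmem2 a' c' hac'
        have hc'B2 : c' ∈ blk p c := by rw [← hB2']; exact hmem2 p' c' hpc'
        rw [hmem a c hac] at hc'M1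
        rcases hc'M1 with h' | h' | h'
        · rw [h'] at hc'B2
          exact absurd hc'B2 haB2
        · exact Or.inl ⟨hp'p, h, h'⟩
        · rw [h'] at hc'B2
          exact absurd hc'B2 huB2
      · -- a' = third p a : impossible
        have hM1' : blk a' c' = blk (third p a) (third p c) := by
          rcases hcross with ⟨h1, _⟩ | ⟨h1, _⟩
          · exfalso
            have hmem' : a' ∈ blk a c := by
              rw [← h1]; exact hmem1 a' c' hac'
            rw [h] at hmem'
            exact hbM1 hmem'
          · exact h1
        exfalso
        have hmem' : third a' c' ∈ blk (third p a) (third p c) := by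
          rw [← hM1']; exact hmem3 a' c' hac'
        rw [hu] at hmem'
        exact huM4 hmem'
    · -- blk p' a' = blk p c
      have ha'B2 : a' ∈ blk p c := by rw [← hB1']; exact hmem2 p' a' hpa'
      rw [hmem p c hpc] at ha'B2
      rcases ha'B2 with h | h | h
      · exact absurd (hp'p.trans h.symm) hpa'
      · -- a' = c : the swapped case
        have hM1' : blk a' c' = blk a c := by
          rcases hcross with ⟨h1, _⟩ | ⟨h1, _⟩
          · exact h1
          · exfalso
            have hmem' : a' ∈ blk (third p a) (third p c) := by
              rw [← h1]; exact hmem1 a' c' hac'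
            rw [h] at hmem'
            exact hcM4 hmem'
        have hB2' : blk p' c' = blk p a := by
          rcases hB2'B with h' | h'
          · exact h'
          · exact absurd (hB1'.trans h'.symm) hB12'
        have hc'M1 : c' ∈ blk a c := by rw [← hM1']; exact hmem2 a' c' hac'
        have hc'B1 : c' ∈ blk p a := by rw [← hB2']; exact hmem2 p' c' hpc'
        rw [hmem a c hac] at hc'M1
        rcases hc'M1 with h' | h' | h'
        · exact Or.inr ⟨hp'p, h, h'⟩
        · rw [h'] at hc'B1
          exact absurd hc'B1 hc
        · rw [h'] at hc'B1
          exact absurd hc'B1 huB1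
      · -- a' = third p c : impossible
        have hM1' : blk a' c' = blk (third p a) (third p c) := by
          rcases hcross with ⟨h1, _⟩ | ⟨h1, _⟩
          · exfalso
            have hmem' : a' ∈ blk a c := by
              rw [← h1]; exact hmem1 a' c' hac'
            rw [h] at hmem'
            exact hdM1 hmem'
          · exact h1
        exfalso
        have hmem' : third a' c' ∈ blk (third p a) (third p c) := by
          rw [← hM1']; exact hmem3 a' c' hac'
        rw [hu] at hmem'
        exact huM4 hmem'
  -- ===== existence of a small even set of blocks =====
  have hkey : ∃ E : Finset (Finset V), (∀ B ∈ E, B ∈ 𝓑) ∧ E.Nonempty ∧ E.card ≤ 8 ∧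
      ∀ q : V, Even ((E.filter (fun B => q ∈ B)).card) := by
    by_cases hPasch : ∃ p a c : V, p ≠ a ∧ c ∉ blk p a ∧
        third a c = third (third p a) (third p c)
    · obtain ⟨p, a, c, hpa, hc, huw⟩ := hPasch
      obtain ⟨hpc, hac, hbd, _⟩ := hfacts p a c hpa hc
      refine ⟨{blk p a, blk p c, blk a c, blk (third p a) (third p c)}, ?_, ?_, ?_, ?_⟩
      · intro B hB
        simp only [Finset.mem_insert, Finset.mem_singleton] at hB
        rcases hB with rfl | rfl | rfl | rfl
        · exact hblkmem p a hpa
        · exact hblkmem p c hpc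
        · exact hblkmem a c hac
        · exact hblkmem _ _ hbd
      · exact ⟨blk p a, by simp⟩
      · exact le_trans (card_le_four _ _ _ _) (by norm_num)
      · intro q
        have h := hquad p a c hpa hc q
        rw [if_neg (fun hcon => hcon.2 huw)] at h
        exact Nat.even_iff.mpr h
    · push_neg at hPasch
      -- the domain of quadrilateral tuples and the defect map
      set D : Finset (Σ _ : V × V, V) :=
        (Finset.univ : Finset V).offDiag.sigma
          (fun pa => Finset.univ \ blk pa.1 pa.2) with hDdef
      set Φ : (Σ _ : V × V, V) → V × V :=
        (fun t => (third t.1.2 t.2, third (third t.1.1 t.1.2) (third t.1.1 t.2))) with hΦdef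
      have hDmem : ∀ t : (Σ _ : V × V, V),
          t ∈ D ↔ (t.1.1 ≠ t.1.2 ∧ t.2 ∉ blk t.1.1 t.1.2) := by
        intro t
        rw [hDdef]
        simp [Finset.mem_sigma, Finset.mem_offDiag]
      by_cases hcol : ∃ t ∈ D, ∃ t' ∈ D, Φ t = Φ t' ∧
          ({blk t.1.1 t.1.2, blk t.1.1 t.2, blk t.1.2 t.2,
            blk (third t.1.1 t.1.2) (third t.1.1 t.2)} : Finset (Finset V)) ≠
          {blk t'.1.1 t'.1.2, blk t'.1.1 t'.2, blk t'.1.2 t'.2,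
            blk (third t'.1.1 t'.1.2) (third t'.1.1 t'.2)}
      · obtain ⟨t, htD, t', ht'D, hft, hQne⟩ := hcol
        obtain ⟨⟨p, a⟩, c⟩ := t
        obtain ⟨⟨p', a'⟩, c'⟩ := t'
        obtain ⟨hpa, hc⟩ := (hDmem _).mp htD
        obtain ⟨hpa', hc'⟩ := (hDmem _).mp ht'D
        simp only [hΦdef, Prod.mk.injEq] at hft
        obtain ⟨hu, hw⟩ := hft
        set Q1 : Finset (Finset V) :=
          {blk p a, blk p c, blk a c, blk (third p a) (third p c)} with hQ1def
        set Q2 : Finset (Finset V) :=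
          {blk p' a', blk p' c', blk a' c', blk (third p' a') (third p' c')} with hQ2def
        have hQne2 : Q1 ≠ Q2 := hQne
        have hQ1B : ∀ B ∈ Q1, B ∈ 𝓑 := by
          obtain ⟨hpc, hac, hbd, _⟩ := hfacts p a c hpa hc
          intro B hB
          rw [hQ1def] at hB
          simp only [Finset.mem_insert, Finset.mem_singleton] at hB
          rcases hB with rfl | rfl | rfl | rfl
          · exact hblkmem p a hpa
          · exact hblkmem p c hpc
          · exact hblkmem a c hac
          · exact hblkmem _ _ hbd
        have hQ2B : ∀ B ∈ Q2, B ∈ 𝓑 := by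
          obtain ⟨hpc', hac', hbd', _⟩ := hfacts p' a' c' hpa' hc'
          intro B hB
          rw [hQ2def] at hB
          simp only [Finset.mem_insert, Finset.mem_singleton] at hB
          rcases hB with rfl | rfl | rfl | rfl
          · exact hblkmem p' a' hpa'
          · exact hblkmem p' c' hpc'
          · exact hblkmem a' c' hac'
          · exact hblkmem _ _ hbd'
        refine ⟨(Q1 \ Q2) ∪ (Q2 \ Q1), ?_, ?_, ?_, ?_⟩
        · intro B hB
          rcases Finset.mem_union.mp hB with h | h
          · exact hQ1B B (Finset.mem_sdiff.mp h).1
          · exact hQ2B B (Finset.mem_sdiff.mp h).1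
        · rw [Finset.nonempty_iff_ne_empty]
          intro hE
          rw [Finset.union_eq_empty] at hE
          exact hQne2 (le_antisymm (Finset.sdiff_eq_empty_iff_subset.mp hE.1)
            (Finset.sdiff_eq_empty_iff_subset.mp hE.2))
        · refine le_trans (Finset.card_union_le _ _) ?_
          have h1 : (Q1 \ Q2).card ≤ 4 :=
            le_trans (Finset.card_le_card (Finset.sdiff_subset)) (card_le_four _ _ _ _)
          have h2 : (Q2 \ Q1).card ≤ 4 :=
            le_trans (Finset.card_le_card (Finset.sdiff_subset)) (card_le_four _ _ _ _)
          omega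
        · intro q
          have hq1 := hquad p a c hpa hc q
          have hq2 := hquad p' a' c' hpa' hc' q
          rw [← hu, ← hw] at hq2
          rw [← hQ1def] at hq1
          rw [← hQ2def] at hq2
          have hpar : (Q1.filter (fun B => q ∈ B)).card % 2 =
              (Q2.filter (fun B => q ∈ B)).card % 2 := by rw [hq1, hq2]
          have hA : (Q1.filter (fun B => q ∈ B)).card =
              ((Q1 \ Q2).filter (fun B => q ∈ B)).card +
              ((Q1 ∩ Q2).filter (fun B => q ∈ B)).card := by
            conv_lhs => rw [← Finset.sdiff_union_inter Q1 Q2]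
            rw [Finset.filter_union]
            exact Finset.card_union_of_disjoint
              (Disjoint.mono (Finset.filter_subset _ _) (Finset.filter_subset _ _)
                (Finset.disjoint_sdiff_inter Q1 Q2))
          have hB : (Q2.filter (fun B => q ∈ B)).card =
              ((Q2 \ Q1).filter (fun B => q ∈ B)).card +
              ((Q1 ∩ Q2).filter (fun B => q ∈ B)).card := by
            conv_lhs => rw [← Finset.sdiff_union_inter Q2 Q1]
            rw [Finset.filter_union, Finset.inter_comm Q2 Q1]
            exact Finset.card_union_of_disjoint
              (Disjoint.mono (Finset.filter_subset _ _) (Finset.filter_subset _ _)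
                (by rw [Finset.inter_comm Q1 Q2]; exact Finset.disjoint_sdiff_inter Q2 Q1))
          have hC : (((Q1 \ Q2) ∪ (Q2 \ Q1)).filter (fun B => q ∈ B)).card =
              ((Q1 \ Q2).filter (fun B => q ∈ B)).card +
              ((Q2 \ Q1).filter (fun B => q ∈ B)).card := by
            rw [Finset.filter_union]
            exact Finset.card_union_of_disjoint
              (Disjoint.mono (Finset.filter_subset _ _) (Finset.filter_subset _ _)
                (disjoint_sdiff_sdiff))
          rw [Nat.even_iff, hC]
          omega
      · -- no collision: pigeonhole contradiction
        exfalso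
        push_neg at hcol
        have hterm : ∀ pa ∈ (Finset.univ : Finset V).offDiag,
            (Finset.univ \ blk pa.1 pa.2).card = v - 3 := by
          intro pa hpa
          rw [Finset.mem_offDiag] at hpa
          rw [Finset.card_sdiff_of_subset (Finset.subset_univ _), Finset.card_univ, hv,
            hcardblk _ _ hpa.2.2]
        have hDcard : D.card = (v * v - v) * (v - 3) := by
          rw [hDdef, Finset.card_sigma, Finset.sum_congr rfl hterm,
            Finset.sum_const, smul_eq_mul, Finset.offDiag_card, Finset.card_univ, hv]
        have hfib : ∀ pr ∈ D.image Φ, (D.filter (fun t => Φ t = pr)).card ≤ 2 := by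
          intro pr hpr
          obtain ⟨t, htD, rfl⟩ := Finset.mem_image.mp hpr
          obtain ⟨⟨p, a⟩, c⟩ := t
          obtain ⟨hpa, hc⟩ := (hDmem _).mp htD
          have hsub : D.filter (fun t' => Φ t' = Φ ⟨(p, a), c⟩) ⊆
              {⟨(p, a), c⟩, ⟨(p, c), a⟩} := by
            intro t' ht'
            rw [Finset.mem_filter] at ht'
            obtain ⟨ht'D, hft⟩ := ht'
            obtain ⟨⟨p', a'⟩, c'⟩ := t'
            obtain ⟨hpa', hc'⟩ := (hDmem _).mp ht'D
            have hQeq := hcol _ ht'D _ htD hft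
            simp only [hΦdef, Prod.mk.injEq] at hft
            obtain ⟨hu, hw⟩ := hft
            have hne := hPasch p a c hpa hc
            have := hrep p a c p' a' c' hpa hc hpa' hc' hQeq hu hw hne
            rcases this with ⟨rfl, rfl, rfl⟩ | ⟨rfl, rfl, rfl⟩
            · exact Finset.mem_insert_self _ _
            · exact Finset.mem_insert_of_mem (Finset.mem_singleton_self _)
          refine le_trans (Finset.card_le_card hsub) ?_
          refine le_trans (Finset.card_insert_le _ _) ?_
          simp
        have hble := Finset.card_le_mul_card_image (f := Φ) D 2 hfib
        have himg : (D.image Φ).card ≤ v * v := by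
          refine le_trans (Finset.card_le_univ _) ?_
          rw [Fintype.card_prod, hv]
        have hle : D.card ≤ 2 * (v * v) := le_trans hble (by omega)
        rw [hDcard] at hle
        obtain ⟨k, rfl⟩ : ∃ k : ℕ, v = k + 7 := ⟨v - 7, by omega⟩
        have e1 : (k + 7) * (k + 7) - (k + 7) = (k + 7) * (k + 6) := by
          have h' : (k + 7) * (k + 7) = (k + 7) * (k + 6) + (k + 7) := by ring
          omega
        have e2 : k + 7 - 3 = k + 4 := by omega
        rw [e1, e2] at hle
        have hgt : 2 * ((k + 7) * (k + 7)) < (k + 7) * (k + 6) * (k + 4) := by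
          nlinarith [Nat.zero_le k]
        omega
  -- ===== lower bound: every nonzero codeword has weight ≥ 4 =====
  have hzmod : ∀ z : ZMod 2, z ≠ 0 → z = 1 := by decide
  have hmulvec : ∀ (x : {B // B ∈ 𝓑} → ZMod 2) (p : V),
      H.mulVec x p = ∑ B : {B // B ∈ 𝓑}, if p ∈ B.1 then x B else 0 := by
    intro x p
    simp only [Matrix.mulVec, dotProduct, hH, ite_mul, one_mul, zero_mul]
  have hlow : ∀ x : {B // B ∈ 𝓑} → ZMod 2, H.mulVec x = 0 → x ≠ 0 →
      4 ≤ (Finset.univ.filter (fun B => x B ≠ 0)).card := by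
    intro x hx hx0
    set S := Finset.univ.filter (fun B => x B ≠ 0) with hSdef
    have hxS : ∀ B : {B // B ∈ 𝓑}, B ∈ S → x B = 1 := by
      intro B hB
      rw [hSdef, Finset.mem_filter] at hB
      exact hzmod _ hB.2
    have hxS0 : ∀ B : {B // B ∈ 𝓑}, B ∉ S → x B = 0 := by
      intro B hB
      rw [hSdef, Finset.mem_filter] at hB
      by_contra h
      exact hB ⟨Finset.mem_univ B, h⟩
    have hdeg : ∀ p : V, Even ((S.filter (fun B => p ∈ B.1)).card) := by
      intro p
      have h := congrFun hx p
      rw [hmulvec, Pi.zero_apply] at h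
      have h2 : (∑ B ∈ S, if p ∈ B.1 then x B else 0) =
          ∑ B : {B // B ∈ 𝓑}, if p ∈ B.1 then x B else 0 :=
        Finset.sum_subset (Finset.subset_univ S)
          (fun B _ hB => by rw [hxS0 B hB]; simp)
      have h3 : (∑ B ∈ S, if p ∈ B.1 then x B else 0) =
          ∑ B ∈ S, if p ∈ B.1 then (1 : ZMod 2) else 0 :=
        Finset.sum_congr rfl (fun B hB => by rw [hxS B hB])
      have h4 : ((S.filter (fun B => p ∈ B.1)).card : ZMod 2) = 0 := by
        rw [Finset.natCast_card_filter, ← h3, h2, h]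
      rw [ZMod.natCast_eq_zero_iff] at h4
      exact even_iff_two_dvd.mpr h4
    have hSne : S.Nonempty := by
      obtain ⟨B, hB⟩ := Function.ne_iff.mp hx0
      exact ⟨B, by rw [hSdef, Finset.mem_filter]; exact ⟨Finset.mem_univ B, hB⟩⟩
    have hsum : ∑ p : V, ((S.filter (fun B => p ∈ B.1)).card) = 3 * S.card := by
      have h1 : ∀ p : V, (S.filter (fun B => p ∈ B.1)).card =
          ∑ B ∈ S, if p ∈ B.1 then 1 else 0 := fun p => Finset.card_filter _ _
      rw [Finset.sum_congr rfl (fun p _ => h1 p), Finset.sum_comm]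
      have h2 : ∀ B : {B // B ∈ 𝓑}, B ∈ S →
          (∑ p : V, if p ∈ B.1 then 1 else 0) = 3 := by
        intro B _
        rw [Finset.sum_boole]
        have : Finset.univ.filter (fun p => p ∈ B.1) = B.1 := by
          ext z; simp
        rw [this]
        exact_mod_cast hblocks B.1 B.2
      rw [Finset.sum_congr rfl h2, Finset.sum_const, smul_eq_mul, mul_comm]
    have hSeven : Even S.card := by
      have h1 : Even (3 * S.card) := by
        rw [← hsum]
        exact Finset.even_sum _ (fun p _ => hdeg p)
      rw [Nat.even_iff] at h1 ⊢
      omega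
    have hS2 : S.card ≠ 2 := by
      intro h2
      obtain ⟨B, B', hBB', hS⟩ := Finset.card_eq_two.mp h2
      have hvne : B.1 ≠ B'.1 := fun h => hBB' (Subtype.ext h)
      have hnsub : ¬(B.1 ⊆ B'.1) := by
        intro hsub
        exact hvne (Finset.eq_of_subset_of_card_le hsub
          (by rw [hblocks B.1 B.2, hblocks B'.1 B'.2]))
      obtain ⟨p, hpB, hpB'⟩ := Finset.not_subset.mp hnsub
      have hd := hdeg p
      rw [hS] at hd
      have : ({B, B'} : Finset {B // B ∈ 𝓑}).filter (fun C => p ∈ C.1) = {B} := by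
        ext C
        simp only [Finset.mem_filter, Finset.mem_insert, Finset.mem_singleton]
        constructor
        · rintro ⟨rfl | rfl, hp⟩
          · rfl
          · exact absurd hp hpB'
        · rintro rfl
          exact ⟨Or.inl rfl, hpB⟩
      rw [this, Finset.card_singleton] at hd
      exact (Nat.not_even_iff.mpr rfl) hd
    have hS0 : S.card ≠ 0 := fun h => (Finset.nonempty_iff_ne_empty.mp hSne)
      (Finset.card_eq_zero.mp h)
    rw [Nat.even_iff] at hSeven
    omega
  -- ===== build a codeword of weight ≤ 8 =====
  obtain ⟨E, hE𝓑, hEne, hE8, hEeven⟩ := hkey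
  set x : {B // B ∈ 𝓑} → ZMod 2 := fun B => if B.1 ∈ E then 1 else 0 with hxdef
  have hfilter : Finset.univ.filter (fun B : {B // B ∈ 𝓑} => x B ≠ 0) =
      Finset.univ.filter (fun B : {B // B ∈ 𝓑} => B.1 ∈ E) := by
    apply Finset.filter_congr
    intro B _
    rw [hxdef]
    by_cases h : B.1 ∈ E <;> simp [h]
  have hweight : (Finset.univ.filter (fun B => x B ≠ 0)).card = E.card := by
    rw [hfilter]
    apply Finset.card_bij (fun B _ => B.1)
    · intro B hB
      rw [Finset.mem_filter] at hB
      exact hB.2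
    · intro B hB B' hB' h
      exact Subtype.ext h
    · intro B hB
      exact ⟨⟨B, hE𝓑 B hB⟩, by simp [hB], rfl⟩
  have hx0 : x ≠ 0 := by
    obtain ⟨B0, hB0⟩ := hEne
    intro h
    have := congrFun h ⟨B0, hE𝓑 B0 hB0⟩
    rw [hxdef] at this
    simp [hB0] at this
  have hxker : H.mulVec x = 0 := by
    funext p
    rw [hmulvec, Pi.zero_apply]
    have h1 : (∑ B : {B // B ∈ 𝓑}, if p ∈ B.1 then x B else 0) =
        ∑ B : {B // B ∈ 𝓑}, if p ∈ B.1 ∧ B.1 ∈ E then (1 : ZMod 2) else 0 := by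
      apply Finset.sum_congr rfl
      intro B _
      rw [hxdef]
      by_cases h : p ∈ B.1 <;> by_cases h' : B.1 ∈ E <;> simp [h, h']
    rw [h1, Finset.sum_boole]
    have h2 : (Finset.univ.filter (fun B : {B // B ∈ 𝓑} => p ∈ B.1 ∧ B.1 ∈ E)).card =
        (E.filter (fun B => p ∈ B)).card := by
      apply Finset.card_bij (fun B _ => B.1)
      · intro B hB
        rw [Finset.mem_filter] at hB ⊢
        exact ⟨hB.2.2, hB.2.1⟩
      · intro B hB B' hB' h
        exact Subtype.ext h
      · intro B hB
        rw [Finset.mem_filter] at hB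
        exact ⟨⟨B, hE𝓑 B hB.1⟩, by simp [hB.1, hB.2], rfl⟩
    rw [h2, ZMod.natCast_eq_zero_iff]
    exact even_iff_two_dvd.mp (hEeven p)
  -- ===== conclusion =====
  set Wset : Set ℕ := {w : ℕ | ∃ x : {B // B ∈ 𝓑} → ZMod 2, H.mulVec x = 0 ∧ x ≠ 0 ∧
      (Finset.univ.filter (fun B => x B ≠ 0)).card = w} with hWdef
  have hmemW : E.card ∈ Wset := ⟨x, hxker, hx0, hweight⟩
  have hneW : Wset.Nonempty := ⟨E.card, hmemW⟩
  refine ⟨sInf Wset, ⟨Nat.sInf_mem hneW, fun w hw => Nat.sInf_le hw⟩, ?_, ?_⟩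
  · obtain ⟨y, hyk, hy0, hyc⟩ := Nat.sInf_mem hneW
    rw [← hyc]
    exact hlow y hyk hy0
  · exact le_trans (Nat.sInf_le hmemW) hE8
end

section
/- Let q be an odd prime power, 𝔽_q a finite field of order q, m ≥ 2, and let H be the point-by-line incidence matrix over 𝔽₂ of PG₁(m,q) (rows indexed by 1-dimensional subspaces of 𝔽_q^{m+1}, columns indexed by 2-dimensional subspaces, entry 1 exactly when the point is contained in the line). Then the rank of H over 𝔽₂ equals v − 1 = (q^{m+1} − q)/(q − 1), where v = (q^{m+1} − 1)/(q − 1) is the number of points. -/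
open scoped Classical

noncomputable instance (F : Type) [Field F] [Fintype F] (n k : ℕ) :
    Fintype {P : Submodule F (Fin n → F) // Module.finrank F P = k} :=
  Fintype.ofFinite _

/-!
Over `𝔽₂` every column of `H` has `q + 1` ones, an even number, so the column space lies in the
hyperplane of vectors with coordinate sum `0`, which has dimension `v - 1`. Conversely, if `P` is a
point of a plane `π`, the lines of `π` through `P` add up to `1_π + e_P`: a point `R ≠ P` of `π`
lies on exactly one of them, while `P` lies on all `q + 1`. Taking a plane through two points
`P` and `Q` exhibits `e_P + e_Q` as a sum of columns, and these vectors span the hyperplane.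
-/

open Module Submodule

section SumFunctional

variable {K ι : Type*} [Field K] [Fintype ι] [DecidableEq ι]

theorem span_eq_ker_sum_proj {S : Set (ι → K)} (hS : ∀ s ∈ S, ∑ i, s i = 0)
    (hsingle : ∀ i j, Pi.single i 1 - Pi.single j 1 ∈ span K S) :
    span K S = LinearMap.ker (∑ i, LinearMap.proj i : (ι → K) →ₗ[K] K) := by
  refine le_antisymm (span_le.mpr fun s hs => by simpa using hS s hs) fun x hx => ?_
  cases isEmpty_or_nonempty ι
  · simp [Subsingleton.elim x 0]
  obtain ⟨j⟩ := ‹Nonempty ι›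
  have hx : ∑ i, x i = 0 := by simpa using hx
  have : x = ∑ i, x i • (Pi.single i 1 - Pi.single j 1 : ι → K) := by
    simp only [smul_sub, Finset.sum_sub_distrib, ← Finset.sum_smul, hx, zero_smul, sub_zero]
    ext k
    simp [Finset.sum_apply, Pi.single_apply]
  rw [this]
  exact sum_mem fun i _ => smul_mem _ _ (hsingle i j)

theorem finrank_ker_sum_proj [Nonempty ι] :
    finrank K (LinearMap.ker (∑ i, LinearMap.proj i : (ι → K) →ₗ[K] K)) =
      Fintype.card ι - 1 := by
  obtain ⟨j⟩ := ‹Nonempty ι›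
  have hsurj : LinearMap.range (∑ i, LinearMap.proj i : (ι → K) →ₗ[K] K) = ⊤ :=
    LinearMap.range_eq_top.mpr fun c => ⟨Pi.single j c, by simp⟩
  have := LinearMap.finrank_range_add_finrank_ker (∑ i, LinearMap.proj i : (ι → K) →ₗ[K] K)
  rw [hsurj, finrank_top, finrank_self, finrank_fintype_fun_eq_card] at this
  omega

end SumFunctional

theorem Nat.card_eq_mul_of_card_fiber {α β : Type*} [Finite α] [Finite β] (f : α → β) {k : ℕ}
    (h : ∀ b, Nat.card {a // f a = b} = k) : Nat.card α = Nat.card β * k := by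
  have := Fintype.ofFinite β
  rw [← Nat.card_congr (Equiv.sigmaFiberEquiv f), Nat.card_sigma]
  simp [h, Nat.card_eq_fintype_card, mul_comm]

theorem Nat.card_subtype_and_ne {α : Type*} [Finite α] {p : α → Prop} {a : α} (ha : p a) :
    Nat.card {x // p x ∧ x ≠ a} = Nat.card {x // p x} - 1 :=
  Set.ncard_sdiff_singleton_of_mem (s := {x | p x}) ha

abbrev ProjPoint (F V : Type*) [Field F] [AddCommGroup V] [Module F V] :=
  {P : Submodule F V // finrank F P = 1}

abbrev ProjLine (F V : Type*) [Field F] [AddCommGroup V] [Module F V] :=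
  {L : Submodule F V // finrank F L = 2}

section Geometry

variable {F V : Type*} [Field F] [AddCommGroup V] [Module F V] [FiniteDimensional F V]

theorem Submodule.exists_le_finrank_eq_add_one (W : Submodule F V)
    (h : finrank F W < finrank F V) :
    ∃ W' : Submodule F V, W ≤ W' ∧ finrank F W' = finrank F W + 1 := by
  obtain ⟨v, hv⟩ : ∃ v, v ∉ W := SetLike.exists_not_mem_of_ne_top W fun hW => by
    rw [hW, finrank_top] at h
    exact h.false
  exact ⟨W ⊔ span F {v}, le_sup_left, finrank_sup_span_singleton hv⟩

namespace ProjPoint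

theorem finrank_sup {P Q : ProjPoint F V} (h : P ≠ Q) : finrank F ↥(P.1 ⊔ Q.1) = 2 := by
  have hlt : P.1 ⊓ Q.1 < P.1 := inf_le_left.lt_of_ne fun he =>
    h (Subtype.ext (eq_of_le_of_finrank_eq (he ▸ inf_le_right) (P.2.trans Q.2.symm)))
  have := finrank_lt_finrank_of_lt hlt
  have := finrank_sup_add_finrank_inf_eq P.1 Q.1
  rw [P.2, Q.2] at *
  omega

def join (P Q : ProjPoint F V) (h : P ≠ Q) : ProjLine F V := ⟨P.1 ⊔ Q.1, finrank_sup h⟩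

theorem eq_join {P Q : ProjPoint F V} (h : P ≠ Q) {L : ProjLine F V} (hP : P.1 ≤ L.1)
    (hQ : Q.1 ≤ L.1) : L = join P Q h :=
  Subtype.ext (eq_of_le_of_finrank_eq (sup_le hP hQ) (by rw [finrank_sup h, L.2])).symm

end ProjPoint

end Geometry

namespace ProjPoint

variable {F V : Type*} [Field F] [AddCommGroup V] [Module F V]

variable (F V) in
theorem card_eq_geom_sum [Finite F] :
    Nat.card (ProjPoint F V) = ∑ i ∈ Finset.range (finrank F V), Nat.card F ^ i := by
  rw [← Nat.card_congr (Projectivization.equivSubmodule F V),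
    Projectivization.card_of_finrank F V rfl]

def leEquiv (W : Submodule F V) : {P : ProjPoint F V // P.1 ≤ W} ≃ ProjPoint F W where
  toFun P := ⟨P.1.1.comap W.subtype, by
    rw [← finrank_map_subtype_eq, map_comap_subtype, inf_eq_right.mpr P.2, P.1.2]⟩
  invFun P := ⟨⟨P.1.map W.subtype, by rw [finrank_map_subtype_eq, P.2]⟩, map_subtype_le _ _⟩
  left_inv P := Subtype.ext <| Subtype.ext <| (map_comap_subtype _ _).trans (inf_eq_right.mpr P.2)
  right_inv P := Subtype.ext (comap_map_eq_of_injective W.injective_subtype _)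

theorem card_le [Finite F] (W : Submodule F V) :
    Nat.card {P : ProjPoint F V // P.1 ≤ W} =
      ∑ i ∈ Finset.range (finrank F W), Nat.card F ^ i := by
  rw [Nat.card_congr (leEquiv W), card_eq_geom_sum]

end ProjPoint

theorem ProjLine.card_points {F V : Type*} [Field F] [Finite F] [AddCommGroup V] [Module F V]
    (L : ProjLine F V) : Nat.card {P : ProjPoint F V // P.1 ≤ L.1} = Nat.card F + 1 := by
  simp [ProjPoint.card_le, L.2, Finset.sum_range_succ, add_comm]

section Counting

variable {F V : Type*} [Field F] [Finite F] [AddCommGroup V] [Module F V] [FiniteDimensional F V]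

instance : Finite (Submodule F V) :=
  have := Module.finite_of_finite F (M := V)
  Finite.of_injective _ SetLike.coe_injective

theorem card_lines_through_mul {W : Submodule F V} {P : ProjPoint F V} (hP : P.1 ≤ W) :
    Nat.card {L : ProjLine F V // L.1 ≤ W ∧ P.1 ≤ L.1} * Nat.card F =
      Nat.card {R : ProjPoint F V // R.1 ≤ W} - 1 := by
  let f : {R : ProjPoint F V // R.1 ≤ W ∧ R ≠ P} → {L : ProjLine F V // L.1 ≤ W ∧ P.1 ≤ L.1} :=
    fun R => ⟨P.join R.1 R.2.2.symm, sup_le hP R.2.1, le_sup_left⟩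
  have hfiber : ∀ L, Nat.card {R // f R = L} = Nat.card F := fun L => by
    have e : {R // f R = L} ≃ {R : ProjPoint F V // R.1 ≤ L.1.1 ∧ R ≠ P} :=
      { toFun R := ⟨R.1.1, le_sup_right.trans (congrArg (fun L => L.1.1) R.2).le, R.1.2.2⟩
        invFun R := ⟨⟨R.1, R.2.1.trans L.2.1, R.2.2⟩,
          Subtype.ext (ProjPoint.eq_join R.2.2.symm L.2.2 R.2.1).symm⟩
        left_inv R := rfl
        right_inv R := rfl }
    rw [Nat.card_congr e, Nat.card_subtype_and_ne (p := fun R : ProjPoint F V => R.1 ≤ L.1.1) L.2.2,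
      L.1.card_points]
    omega
  rw [← Nat.card_eq_mul_of_card_fiber f hfiber,
    Nat.card_subtype_and_ne (p := fun R : ProjPoint F V => R.1 ≤ W) hP]

theorem card_lines_through_of_finrank_eq_three {π : Submodule F V} (hπ : finrank F π = 3)
    {P : ProjPoint F V} (hP : P.1 ≤ π) :
    Nat.card {L : ProjLine F V // L.1 ≤ π ∧ P.1 ≤ L.1} = Nat.card F + 1 := by
  have h := card_lines_through_mul hP
  rw [ProjPoint.card_le, hπ] at h
  simp only [Finset.sum_range_succ, Finset.sum_range_zero] at h
  refine Nat.eq_of_mul_eq_mul_right Nat.card_pos (h.trans ?_)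
  ring_nf
  omega

end Counting

noncomputable def ProjLine.incidence {F V : Type*} [Field F] [AddCommGroup V] [Module F V]
    (L : ProjLine F V) : ProjPoint F V → ZMod 2 :=
  fun P => if P.1 ≤ L.1 then 1 else 0

theorem ProjLine.sum_incidence {F V : Type*} [Field F] [Finite F] [AddCommGroup V] [Module F V]
    [Fintype (ProjPoint F V)] (hq : Odd (Nat.card F)) (L : ProjLine F V) :
    ∑ P, L.incidence P = 0 := by
  simp only [ProjLine.incidence]
  rw [Finset.sum_boole, ← Fintype.card_subtype, ← Nat.card_eq_fintype_card, L.card_points]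
  exact ZMod.natCast_eq_zero_iff_even.mpr hq.add_one

section Incidence

variable {F V : Type*} [Field F] [Finite F] [AddCommGroup V] [Module F V] [FiniteDimensional F V]

theorem indicator_add_single_mem_span_incidence (hq : Odd (Nat.card F)) {π : Submodule F V}
    (hπ : finrank F π = 3) {P : ProjPoint F V} (hP : P.1 ≤ π) :
    (fun R : ProjPoint F V => if R.1 ≤ π then (1 : ZMod 2) else 0) + Pi.single P 1 ∈
      span (ZMod 2) (Set.range ProjLine.incidence) := by
  have := Fintype.ofFinite (ProjLine F V)
  have hsum : ∑ L : ProjLine F V with L.1 ≤ π ∧ P.1 ≤ L.1, L.incidence =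
      (fun R : ProjPoint F V => if R.1 ≤ π then (1 : ZMod 2) else 0) + Pi.single P 1 := by
    ext R
    simp only [Finset.sum_apply, ProjLine.incidence, Finset.sum_boole, Finset.filter_filter,
      ← Fintype.card_subtype, Fintype.card_eq_nat_card, Pi.add_apply]
    by_cases hRP : R = P
    · subst hRP
      have : Nat.card {L : ProjLine F V // (L.1 ≤ π ∧ R.1 ≤ L.1) ∧ R.1 ≤ L.1} = Nat.card F + 1 :=
        (Nat.card_congr (Equiv.subtypeEquivRight fun L => and_iff_left_of_imp And.right)).trans
          (card_lines_through_of_finrank_eq_three hπ hP)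
      rw [this, if_pos hP, Pi.single_eq_same, ZMod.natCast_eq_zero_iff_even.mpr hq.add_one]
      decide
    by_cases hR : R.1 ≤ π
    · have : Nat.card {L : ProjLine F V // (L.1 ≤ π ∧ P.1 ≤ L.1) ∧ R.1 ≤ L.1} = 1 :=
        Nat.card_eq_one_iff_exists.mpr ⟨⟨P.join R (Ne.symm hRP), ⟨sup_le hP hR, le_sup_left⟩,
          le_sup_right⟩, fun L => Subtype.ext (ProjPoint.eq_join (Ne.symm hRP) L.2.1.2 L.2.2)⟩
      simp only [this, if_pos hR, Pi.single_eq_of_ne hRP, Nat.cast_one, add_zero]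
    · have : IsEmpty {L : ProjLine F V // (L.1 ≤ π ∧ P.1 ≤ L.1) ∧ R.1 ≤ L.1} :=
        ⟨fun L => hR (L.2.2.trans L.2.1.1)⟩
      simp only [Nat.card_of_isEmpty, if_neg hR, Pi.single_eq_of_ne hRP, Nat.cast_zero, add_zero]
  rw [← hsum]
  exact sum_mem fun L _ => subset_span ⟨L, rfl⟩

theorem single_add_single_mem_span_incidence (hq : Odd (Nat.card F))
    (hV : 3 ≤ finrank F V) (P Q : ProjPoint F V) :
    Pi.single P 1 + Pi.single Q 1 ∈ span (ZMod 2) (Set.range ProjLine.incidence) := by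
  obtain rfl | hPQ := eq_or_ne P Q
  · rw [ZModModule.add_self]
    exact zero_mem _
  set ℓ := P.join Q hPQ
  obtain ⟨π, hℓπ, hπ⟩ := ℓ.1.exists_le_finrank_eq_add_one (by rw [ℓ.2]; omega)
  rw [ℓ.2] at hπ
  have h := add_mem (indicator_add_single_mem_span_incidence hq hπ (le_sup_left.trans hℓπ))
    (indicator_add_single_mem_span_incidence hq hπ (le_sup_right.trans hℓπ))
  rwa [add_add_add_comm, ZModModule.add_self, zero_add] at h

theorem finrank_span_incidence (hq : Odd (Nat.card F)) (hV : 3 ≤ finrank F V) :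
    finrank (ZMod 2) (span (ZMod 2) (Set.range (ProjLine.incidence (F := F) (V := V)))) =
      Nat.card (ProjPoint F V) - 1 := by
  have := Fintype.ofFinite (ProjPoint F V)
  have : Nontrivial V := Module.nontrivial_of_finrank_pos (R := F) (by omega)
  obtain ⟨v, hv⟩ := exists_ne (0 : V)
  have : Nonempty (ProjPoint F V) := ⟨⟨span F {v}, finrank_span_singleton hv⟩⟩
  rw [span_eq_ker_sum_proj, finrank_ker_sum_proj, Nat.card_eq_fintype_card]
  · rintro - ⟨L, rfl⟩
    exact L.sum_incidence hq
  · intro P Q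
    rw [ZModModule.sub_eq_add]
    exact single_add_single_mem_span_incidence hq hV P Q

end Incidence

/-- Frumkin–Yakir: for `q` an odd prime power and `m ≥ 2`, the
point-by-line incidence matrix `H` over `𝔽₂` of `PG₁(m, q)` has 𝔽₂-rank
`v - 1 = (q^{m+1} - q)/(q - 1)`, where `v = (q^{m+1} - 1)/(q - 1)` is the number of
points. -/
theorem stmt_17 (q m : ℕ) (hq : Odd q) (hm : 2 ≤ m)
    (F : Type) [Field F] [Fintype F] (hF : Fintype.card F = q)
    (H : Matrix {P : Submodule F (Fin (m + 1) → F) // Module.finrank F P = 1}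
      {L : Submodule F (Fin (m + 1) → F) // Module.finrank F L = 2} (ZMod 2))
    (hH : ∀ P L, H P L = if P.1 ≤ L.1 then 1 else 0) :
    Fintype.card {P : Submodule F (Fin (m + 1) → F) // Module.finrank F P = 1} =
        (q ^ (m + 1) - 1) / (q - 1) ∧
      H.rank = (q ^ (m + 1) - 1) / (q - 1) - 1 ∧
      H.rank = (q ^ (m + 1) - q) / (q - 1) := by
  have hFq : Nat.card F = q := Nat.card_eq_fintype_card.trans hF
  have hdim : finrank F (Fin (m + 1) → F) = m + 1 := finrank_fin_fun F
  have hcard : Fintype.card (ProjPoint F (Fin (m + 1) → F)) = (q ^ (m + 1) - 1) / (q - 1) := by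
    rw [← Nat.card_eq_fintype_card, ProjPoint.card_eq_geom_sum, hdim, hFq,
      Nat.geomSum_eq (hFq ▸ Finite.one_lt_card)]
  have hrank : H.rank = (q ^ (m + 1) - 1) / (q - 1) - 1 := by
    rw [Matrix.rank_eq_finrank_span_cols,
      show H.col = ProjLine.incidence from funext₂ fun L P => hH P L,
      finrank_span_incidence (hFq ▸ hq) (by omega), Nat.card_eq_fintype_card, hcard]
  refine ⟨hcard, hrank, hrank.trans ?_⟩
  have hq1 : 1 ≤ q := hq.pos
  have hqpow : q ≤ q ^ (m + 1) := Nat.le_self_pow (by omega) q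
  rw [← Nat.sub_mul_div, mul_one]
  congr 1
  omega
end

section
/- Let q be an odd prime power, 𝔽_q a finite field of order q, m ≥ 2, and let H be the point-by-line incidence matrix over 𝔽₂ of AG₁(m,q) (rows indexed by the vectors of 𝔽_q^m, columns indexed by the cosets of 1-dimensional subspaces of 𝔽_q^m, entry 1 exactly when the point lies on the line). Then the rank of H over 𝔽₂ equals q^m, i.e., H has full row rank. -/
open scoped Classical

/-- The lines of the affine geometry design `AG₁(m, q)`: cosets of the one-dimensional
linear subspaces of `𝔽_q^m`. -/
def AffineLine (F : Type) [Field F] (m : ℕ) : Type :=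
  {ℓ : Set (Fin m → F) // ∃ (W : Submodule F (Fin m → F)) (a : Fin m → F),
    Module.finrank F W = 1 ∧ ℓ = (a + ·) '' (W : Set (Fin m → F))}

noncomputable instance (F : Type) [Field F] [Fintype F] (m : ℕ) :
    Fintype (AffineLine F m) := by
  unfold AffineLine; exact Fintype.ofFinite _

/-!
Fix a point `p` and a plane `p + ⟨u, w⟩` through it. The `q + 1` lines of that plane through
`p` (directions `w` and `u + t • w`) cover `p` exactly `q + 1` times and every other point of
the plane once, while the `q` lines of the plane parallel to `w` cover each of its points once.
Since `q` is odd, over `𝔽₂` the sum of these `2q + 1` columns of the incidence matrix is the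
indicator vector of `p`; so the columns span `𝔽₂^(q^m)`.
-/

variable (F : Type*) {V : Type*} [Field F] [AddCommGroup V] [Module F V]

def lineThrough (a d : V) : Set V := (a + ·) '' (F ∙ d : Set V)

variable {F}

theorem mem_lineThrough {a d x : V} : x ∈ lineThrough F a d ↔ ∃ c : F, x = a + c • d := by
  simp only [lineThrough, Set.mem_image, SetLike.mem_coe, Submodule.mem_span_singleton]
  constructor
  · rintro ⟨_, ⟨c, rfl⟩, rfl⟩; exact ⟨c, rfl⟩
  · rintro ⟨c, rfl⟩; exact ⟨c • d, ⟨c, rfl⟩, rfl⟩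

theorem add_smul_add_smul_eq_iff {u w : V} (huw : LinearIndependent F ![u, w])
    (p : V) (α β α' β' : F) :
    p + α • u + β • w = p + α' • u + β' • w ↔ α = α' ∧ β = β' := by
  refine ⟨fun h => ?_, by rintro ⟨rfl, rfl⟩; rfl⟩
  have := LinearIndependent.pair_iff.1 huw (α - α') (β - β') (by
    rw [sub_smul, sub_smul]; linear_combination (norm := module) h)
  simpa [sub_eq_zero] using this

theorem add_smul_add_smul_mem_lineThrough_iff {u w : V} (huw : LinearIndependent F ![u, w])
    (p : V) (α β s r γ δ : F) :
    p + α • u + β • w ∈ lineThrough F (p + s • u + r • w) (γ • u + δ • w) ↔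
      ∃ c : F, α = s + c * γ ∧ β = r + c * δ := by
  simp only [mem_lineThrough]
  refine exists_congr fun c => ?_
  rw [← add_smul_add_smul_eq_iff huw p]
  constructor <;> intro h <;> linear_combination (norm := module) h

variable [Fintype F]

theorem sum_ite_eq_mul_zmod_two (hF : Odd (Fintype.card F)) (α β : F) :
    ∑ t : F, (if β = α * t then (1 : ZMod 2) else 0) =
      if α = 0 ∧ β ≠ 0 then 0 else 1 := by
  by_cases hα : α = 0
  · by_cases hβ : β = 0
    · simp [hα, hβ, hF.natCast_zmod_two]
    · simp [hα, hβ]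
  · have eq_mul_iff (t : F) : β = α * t ↔ α⁻¹ * β = t := by
      rw [eq_comm, ← eq_inv_mul_iff_mul_eq₀ hα, eq_comm]
    simp [eq_mul_iff, hα]

theorem indicator_lineThrough_add_sum_eq_single [DecidableEq V] (hF : Odd (Fintype.card F))
    {u w : V} (huw : LinearIndependent F ![u, w]) (p : V) :
    (lineThrough F p w).indicator 1 + ∑ t : F, (lineThrough F p (u + t • w)).indicator 1 +
      ∑ s : F, (lineThrough F (p + s • u) w).indicator 1 = (Pi.single p 1 : V → ZMod 2) := by
  funext x
  simp only [Pi.add_apply, Finset.sum_apply, Set.indicator_apply, Pi.one_apply, Pi.single_apply]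
  by_cases hx : ∃ α β : F, x = p + α • u + β • w
  · obtain ⟨α, β, rfl⟩ := hx
    have on_first : p + α • u + β • w ∈ lineThrough F p w ↔ α = 0 := by
      simpa using add_smul_add_smul_mem_lineThrough_iff huw p α β 0 0 0 1
    have on_second (t : F) :
        p + α • u + β • w ∈ lineThrough F p (u + t • w) ↔ β = α * t := by
      simpa using add_smul_add_smul_mem_lineThrough_iff huw p α β 0 0 1 t
    have on_third (s : F) :
        p + α • u + β • w ∈ lineThrough F (p + s • u) w ↔ α = s := by
      simpa using add_smul_add_smul_mem_lineThrough_iff huw p α β s 0 0 1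
    have at_p : p + α • u + β • w = p ↔ α = 0 ∧ β = 0 := by
      simpa using add_smul_add_smul_eq_iff huw p α β 0 0
    simp only [on_first, on_second, on_third, at_p, sum_ite_eq_mul_zmod_two hF, Finset.sum_ite_eq,
      Finset.mem_univ, if_true]
    by_cases hα : α = 0 <;> by_cases hβ : β = 0 <;> simp [hα, hβ] <;> decide
  · have off_first : x ∉ lineThrough F p w := by
      rw [mem_lineThrough]; rintro ⟨c, rfl⟩; exact hx ⟨0, c, by simp⟩
    have off_second (t : F) : x ∉ lineThrough F p (u + t • w) := by
      rw [mem_lineThrough]; rintro ⟨c, rfl⟩; exact hx ⟨c, c * t, by module⟩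
    have off_third (s : F) : x ∉ lineThrough F (p + s • u) w := by
      rw [mem_lineThrough]; rintro ⟨c, rfl⟩; exact hx ⟨s, c, rfl⟩
    have ne_p : x ≠ p := by rintro rfl; exact hx ⟨0, 0, by simp⟩
    simp [off_first, off_second, off_third, ne_p]

theorem Submodule.eq_top_of_forall_single_mem {R ι : Type*} [Semiring R] [Finite ι]
    [DecidableEq ι] {S : Submodule R (ι → R)} (h : ∀ i, Pi.single i 1 ∈ S) : S = ⊤ :=
  eq_top_iff.2 <| (Pi.basisFun R ι).span_eq.symm.le.trans <|
    Submodule.span_le.2 <| Set.range_subset_iff.2 fun i => by simpa using h i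

theorem AffineLine.exists_val_eq_lineThrough {F : Type} [Field F] {m : ℕ} (a d : Fin m → F)
    (hd : d ≠ 0) : ∃ ℓ : AffineLine F m, ℓ.1 = lineThrough F a d :=
  ⟨⟨_, F ∙ d, a, finrank_span_singleton hd, rfl⟩, rfl⟩

theorem single_mem_span_incidence_cols {F : Type} [Field F] [Fintype F]
    (hF : Odd (Fintype.card F)) {m : ℕ} (hm : 2 ≤ m)
    {H : Matrix (Fin m → F) (AffineLine F m) (ZMod 2)}
    (hH : ∀ p ℓ, H p ℓ = if p ∈ ℓ.1 then 1 else 0) (p : Fin m → F) :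
    Pi.single p 1 ∈ Submodule.span (ZMod 2) (Set.range H.col) := by
  have line_mem {a d : Fin m → F} (hd : d ≠ 0) :
      (lineThrough F a d).indicator 1 ∈ Submodule.span (ZMod 2) (Set.range H.col) := by
    obtain ⟨ℓ, hℓ⟩ := AffineLine.exists_val_eq_lineThrough a d hd
    refine Submodule.subset_span ⟨ℓ, funext fun x => ?_⟩
    simp [Matrix.col_apply, hH, hℓ, Set.indicator_apply]
  have hrank : 1 < Module.finrank F (Fin m → F) := by rw [Module.finrank_fin_fun]; omega
  have : Nontrivial (Fin m → F) := Module.nontrivial_of_finrank_pos (one_pos.trans hrank)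
  obtain ⟨u, hu⟩ := exists_ne (0 : Fin m → F)
  obtain ⟨w, huw⟩ := exists_linearIndependent_pair_of_one_lt_finrank hrank hu
  have hw : w ≠ 0 := huw.ne_zero 1
  have hut (t : F) : u + t • w ≠ 0 := fun h => one_ne_zero <|
    (LinearIndependent.pair_iff.1 huw 1 t (by rwa [one_smul])).1
  rw [← indicator_lineThrough_add_sum_eq_single hF huw p]
  exact add_mem (add_mem (line_mem hw) (sum_mem fun t _ => line_mem (hut t)))
    (sum_mem fun s _ => line_mem hw)

/-- Yakir: for `q` an odd prime power and `m ≥ 2`, the point-by-line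
incidence matrix `H` over `𝔽₂` of `AG₁(m, q)` has full 𝔽₂-row-rank `q^m`. -/
theorem stmt_18 (q m : ℕ) (hq : Odd q) (hm : 2 ≤ m)
    (F : Type) [Field F] [Fintype F] (hF : Fintype.card F = q)
    (H : Matrix (Fin m → F) (AffineLine F m) (ZMod 2))
    (hH : ∀ p ℓ, H p ℓ = if p ∈ ℓ.1 then 1 else 0) :
    H.rank = q ^ m := by
  subst hF
  rw [Matrix.rank_eq_finrank_span_cols,
    Submodule.eq_top_of_forall_single_mem (single_mem_span_incidence_cols hq hm hH),
    finrank_top, Module.finrank_pi, Fintype.card_fun, Fintype.card_fin]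
end
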